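/- Composing the two lemmas about the addition network: with c₀ = 0 and c_{i+1} = ⌊(bit_i(n) + bit_i(m) + c_i)/2⌋, setting v_i = bit_i(n) + bit_i(m) + c_i, the output o_i = ((v_i − 1)² − 1)² satisfies: o_i = 0 when bit_i(n+m) = 0, and o_i ≥ 1 when bit_i(n+m) = 1. Hence the network computes binary addition exactly for all pairs of natural numbers. -/

import Mathlib

/-! The carry into position `i` is the overflow `(n mod 2^i + m mod 2^i) / 2^i` of the low parts,
so it is at most 1 and `⌊(n + m) / 2^i⌋ = ⌊n / 2^i⌋ + ⌊m / 2^i⌋ + c_i`; reducing mod 2 gives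
`bit_i(n + m) = v_i mod 2` with `v_i ≤ 3`. The network output is `(v (v - 2))²`, which vanishes at
`v = 0, 2` and is an odd square, hence `≥ 1`, at odd `v`. -/

def bit (i x : ℕ) : ℕ := x / 2 ^ i % 2

def carry (n m : ℕ) : ℕ → ℕ
  | 0 => 0
  | i + 1 => (bit i n + bit i m + carry n m i) / 2

theorem Nat.add_div_eq_div_add_div_add_mod_add_mod_div (a b k : ℕ) :
    (a + b) / k = a / k + b / k + (a % k + b % k) / k := by
  rcases Nat.eq_zero_or_pos k with rfl | hk
  · simp
  have hab : a + b = (a % k + b % k) + k * (a / k + b / k) := by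
    rw [mul_add]; linarith [Nat.mod_add_div a k, Nat.mod_add_div b k]
  rw [hab, Nat.add_mul_div_left _ _ hk, Nat.add_comm]

lemma bit_lt_two (i x : ℕ) : bit i x < 2 :=
  Nat.mod_lt _ two_pos

lemma carry_eq_mod_add_mod_div (n m i : ℕ) :
    carry n m i = (n % 2 ^ i + m % 2 ^ i) / 2 ^ i := by
  induction i with
  | zero => simp [carry, Nat.mod_one]
  | succ i ih =>
    have hsplit : n % 2 ^ (i + 1) + m % 2 ^ (i + 1)
        = (n % 2 ^ i + m % 2 ^ i) + 2 ^ i * (bit i n + bit i m) := by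
      rw [Nat.mod_pow_succ, Nat.mod_pow_succ, bit, bit]; ring
    rw [carry, ih, hsplit, pow_succ, ← Nat.div_div_eq_div_mul,
      Nat.add_mul_div_left _ _ (Nat.two_pow_pos i), Nat.add_comm]

lemma carry_le_one (n m i : ℕ) : carry n m i ≤ 1 := by
  rw [carry_eq_mod_add_mod_div, ← Nat.lt_succ_iff, Nat.div_lt_iff_lt_mul (Nat.two_pow_pos i)]
  have := Nat.mod_lt n (Nat.two_pow_pos i)
  have := Nat.mod_lt m (Nat.two_pow_pos i)
  omega

lemma bit_add (n m i : ℕ) :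
    bit i (n + m) = (bit i n + bit i m + carry n m i) % 2 := by
  rw [bit, Nat.add_div_eq_div_add_div_add_mod_add_mod_div, ← carry_eq_mod_add_mod_div, bit, bit]
  omega

lemma sq_sq_sub_one_sub_one_eq_zero {v : ℤ} (hv : v = 0 ∨ v = 2) : ((v - 1) ^ 2 - 1) ^ 2 = 0 := by
  rcases hv with rfl | rfl <;> norm_num

lemma one_le_sq_sq_sub_one_sub_one_of_odd {v : ℤ} (hv : Odd v) : 1 ≤ ((v - 1) ^ 2 - 1) ^ 2 := by
  have hodd : Odd ((v - 1) ^ 2 - 1) := by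
    obtain ⟨k, rfl⟩ := hv
    exact ⟨2 * k ^ 2 - 1, by ring⟩
  rw [one_le_sq_iff_one_le_abs]
  exact Int.one_le_abs (fun h ↦ by simp [h] at hodd)

/-- The network's output `o_i = ((v_i − 1)² − 1)²`, where
`v_i = bit_i n + bit_i m + c_i`, is 0 exactly when the i-th digit of `n + m`
is 0, and is at least 1 when that digit is 1: the network computes binary
addition exactly for all pairs of natural numbers. -/
theorem addition_network_correct (n m i : ℕ) :
    (bit i (n + m) = 0 →
      (((bit i n + bit i m + carry n m i : ℤ) - 1) ^ 2 - 1) ^ 2 = 0) ∧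
    (bit i (n + m) = 1 →
      1 ≤ (((bit i n + bit i m + carry n m i : ℤ) - 1) ^ 2 - 1) ^ 2) := by
  have hsum := bit_add n m i
  have hn := bit_lt_two i n
  have hm := bit_lt_two i m
  have hc := carry_le_one n m i
  refine ⟨fun h0 ↦ sq_sq_sub_one_sub_one_eq_zero ?_, fun h1 ↦ one_le_sq_sq_sub_one_sub_one_of_odd ?_⟩
  · have : bit i n + bit i m + carry n m i = 0 ∨ bit i n + bit i m + carry n m i = 2 := by omega
    exact_mod_cast this
  · have : Odd (bit i n + bit i m + carry n m i) := Nat.odd_iff.mpr (by omega)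
    exact_mod_cast this
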